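/- arXiv:1901.05321 — 3 statements merged into one kernel-verified Lean document; each statement's English description precedes it below -/
import Mathlib

section
/- There exists a constant C > 0 (one may take C = 5) such that for all positive reals H, h with H > C·h, there do NOT exist nonnegative reals β₁,...,β₈ satisfying simultaneously: β₂−β₁+β₆+β₈−(β₅+β₇) = 0; β₄−β₃+β₇+β₈−(β₅+β₆) = 0; (H²/2)(β₁+β₂+β₅+β₆+β₇+β₈) = 1; (h²/2)(β₃+β₄+β₅+β₆+β₇+β₈) = 1; hH(β₅−β₇+β₈−β₆) = 1. -/
theorem stmt2 : ∃ C : ℝ, 0 < C ∧ ∀ H h : ℝ, 0 < H → 0 < h → H > C * h →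
    ¬ ∃ b1 b2 b3 b4 b5 b6 b7 b8 : ℝ,
      0 ≤ b1 ∧ 0 ≤ b2 ∧ 0 ≤ b3 ∧ 0 ≤ b4 ∧ 0 ≤ b5 ∧ 0 ≤ b6 ∧ 0 ≤ b7 ∧ 0 ≤ b8 ∧
      b2 - b1 + b6 + b8 - (b5 + b7) = 0 ∧
      b4 - b3 + b7 + b8 - (b5 + b6) = 0 ∧
      (H^2 / 2) * (b1 + b2 + b5 + b6 + b7 + b8) = 1 ∧
      (h^2 / 2) * (b3 + b4 + b5 + b6 + b7 + b8) = 1 ∧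
      h * H * (b5 - b7 + b8 - b6) = 1 := by
  refine ⟨5, by norm_num, ?_⟩
  intro H h hH hh hgt
  rintro ⟨b1, b2, b3, b4, b5, b6, b7, b8, h1, h2, h3, h4, h5, h6, h7, h8,
    e1, e2, e3, e4, e5⟩
  -- H²(b1+b2+b5+b6+b7+b8) = 2
  have key : H^2 * (b1 + b2 + b5 + b6 + b7 + b8) = 2 := by linarith
  have hb : b5 - b7 + b8 - b6 ≤ b1 + b2 + b5 + b6 + b7 + b8 := by linarith
  have hH2 : (0:ℝ) < H^2 := by positivity
  -- 1 = hH(b5−b7+b8−b6) ≤ hH · 2/H² = 2h/H < 2/5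
  nlinarith [mul_pos hh hH, mul_le_mul_of_nonneg_left hb (le_of_lt (mul_pos hh hH)),
    mul_pos hH hH, mul_pos hh hh]
end

section
/- Suppose positive reals H, h and nonnegative reals β₁,...,β₈ satisfy: β₄−β₃+β₇+β₈−(β₅+β₆) = 0, (H²/2)(β₁+β₂+β₅+β₆+β₇+β₈) = 1, and hH(β₅−β₇+β₈−β₆) = 1. Then |β₄−β₃| ≤ 8/H² and β₆ ≤ −1/(2hH) + 2/H² + 4/H². In particular, if H > 12h then β₆ < 0, a contradiction; hence no such nonnegative solution exists when H > 12h. -/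
theorem stmt5 (b1 b2 b3 b4 b5 b6 b7 b8 H h : ℝ)
    (hH : 0 < H) (hh : 0 < h)
    (n1 : 0 ≤ b1) (n2 : 0 ≤ b2) (n3 : 0 ≤ b3) (n4 : 0 ≤ b4)
    (n5 : 0 ≤ b5) (n6 : 0 ≤ b6) (n7 : 0 ≤ b7) (n8 : 0 ≤ b8)
    (c2 : b4 - b3 + b7 + b8 - (b5 + b6) = 0)
    (c3 : (H^2 / 2) * (b1 + b2 + b5 + b6 + b7 + b8) = 1)
    (c5 : h * H * (b5 - b7 + b8 - b6) = 1) :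
    |b4 - b3| ≤ 8 / H^2 ∧ b6 ≤ -1 / (2 * h * H) + 2 / H^2 + 4 / H^2 ∧
      (H > 12 * h → False) := by
  have hH2 : (0:ℝ) < H^2 := by positivity
  have hhH : (0:ℝ) < h * H := by positivity
  have hsum : b1 + b2 + b5 + b6 + b7 + b8 = 2 / H^2 := by
    field_simp at c3 ⊢; linarith
  have hc5 : b5 - b7 + b8 - b6 = 1 / (h * H) := by
    field_simp at c5 ⊢; linarith
  have e8 : (8:ℝ) / H^2 = 4 * (2 / H^2) := by ring
  have e4 : (4:ℝ) / H^2 = 2 * (2 / H^2) := by ring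
  have h2pos : (0:ℝ) < 2 / H^2 := by positivity
  have habs : |b4 - b3| ≤ 8 / H^2 := by
    rw [abs_le]
    constructor <;> linarith
  have hb6 : b6 ≤ -1 / (2 * h * H) + 2 / H^2 + 4 / H^2 := by
    have h2 : -1 / (h * H) ≤ -1 / (2 * h * H) := by
      rw [div_le_div_iff₀ (by positivity) (by positivity)]; nlinarith
    have e1 : -(1 / (h * H)) = -1 / (h * H) := by ring
    linarith
  refine ⟨habs, hb6, fun hgt => ?_⟩
  have key : 6 / H^2 < 1 / (2 * h * H) := by
    rw [div_lt_div_iff₀ hH2 (by positivity)]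
    nlinarith
  have e6 : (6:ℝ) / H^2 = 3 * (2 / H^2) := by ring
  have e1 : -1 / (2 * h * H) = -(1 / (2 * h * H)) := by ring
  linarith
end

section
/- For every M > 0 there exist positive reals H, h with H/h > M such that the linear system β₂−β₁+β₆+β₈−(β₅+β₇)=0, β₄−β₃+β₇+β₈−(β₅+β₆)=0, (H²/2)(β₁+β₂+β₅+β₆+β₇+β₈)=1, (h²/2)(β₃+β₄+β₅+β₆+β₇+β₈)=1, hH(β₅−β₇+β₈−β₆)=1 admits a real solution (β₁,...,β₈), but no solution with all βᵢ ≥ 0. -/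
theorem stmt7 : ∀ M : ℝ, 0 < M → ∃ H h : ℝ, 0 < H ∧ 0 < h ∧ H / h > M ∧
    (∃ b1 b2 b3 b4 b5 b6 b7 b8 : ℝ,
      b2 - b1 + b6 + b8 - (b5 + b7) = 0 ∧
      b4 - b3 + b7 + b8 - (b5 + b6) = 0 ∧
      (H^2 / 2) * (b1 + b2 + b5 + b6 + b7 + b8) = 1 ∧
      (h^2 / 2) * (b3 + b4 + b5 + b6 + b7 + b8) = 1 ∧
      h * H * (b5 - b7 + b8 - b6) = 1) ∧
    ¬ ∃ b1 b2 b3 b4 b5 b6 b7 b8 : ℝ,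
      0 ≤ b1 ∧ 0 ≤ b2 ∧ 0 ≤ b3 ∧ 0 ≤ b4 ∧ 0 ≤ b5 ∧ 0 ≤ b6 ∧ 0 ≤ b7 ∧ 0 ≤ b8 ∧
      b2 - b1 + b6 + b8 - (b5 + b7) = 0 ∧
      b4 - b3 + b7 + b8 - (b5 + b6) = 0 ∧
      (H^2 / 2) * (b1 + b2 + b5 + b6 + b7 + b8) = 1 ∧
      (h^2 / 2) * (b3 + b4 + b5 + b6 + b7 + b8) = 1 ∧
      h * H * (b5 - b7 + b8 - b6) = 1 := by
  intro M hM
  refine ⟨M + 2, 1, by linarith, one_pos, by simpa using (by linarith : M < M + 2), ?_, ?_⟩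
  · set H : ℝ := M + 2 with hH
    have hH0 : H ≠ 0 := by positivity
    refine ⟨1/(2*H) + 1/H^2 - 1/H, 1/(2*H) + 1/H^2 - 1/H,
            1/(2*H) + 1 - 1/H, 1/(2*H) + 1 - 1/H,
            1/(2*H), 0, 0, 1/(2*H), by ring, by ring, ?_, ?_, ?_⟩
    · field_simp
      ring
    · field_simp
      ring
    · field_simp
      ring
  · rintro ⟨b1, b2, b3, b4, b5, b6, b7, b8, n1, n2, n3, n4, n5, n6, n7, n8,
      e1, e2, e3, e4, e5⟩
    have hH2 : (2:ℝ) < M + 2 := by linarith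
    nlinarith [mul_nonneg n5 hM.le, mul_nonneg n8 hM.le, mul_nonneg n6 hM.le,
      mul_nonneg n7 hM.le, sq_nonneg (M+2)]
end
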